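/- arXiv:1811.12138 — 2 statements merged into one kernel-verified Lean document; each statement's English description precedes it below -/
import Mathlib

section
/- Let G be a connected simple graph with largest adjacency eigenvalue λ₁. For k ≥ 0 define d_k(i) as the number of walks of length k starting at vertex i (so d₀(i) = 1 and d_{k+1}(i) = Σ_{j adjacent to i} d_k(j)), and let γ^(k) = sqrt( (Σ_i d_{k+1}(i)²) / (Σ_i d_k(i)²) ). Then λ₁ ≥ γ^(k) for every k ≥ 0. -/
/-- The adjacency matrix of a simple graph over `ℝ` is Hermitian. -/
theorem adjHerm {n : ℕ} (G : SimpleGraph (Fin n)) [DecidableRel G.Adj] :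
    (G.adjMatrix ℝ).IsHermitian := by
  rw [Matrix.IsHermitian, Matrix.conjTranspose_eq_transpose_of_trivial]
  exact G.isSymm_adjMatrix

/-- The (real) eigenvalues of the adjacency matrix of `G`. -/
noncomputable def graphEigs {n : ℕ} (G : SimpleGraph (Fin n)) [DecidableRel G.Adj] :
    Fin n → ℝ := (adjHerm G).eigenvalues

/-- The Estrada index `EE(G) = ∑ i, exp (λ i)`. -/
noncomputable def estradaIndex {n : ℕ} (G : SimpleGraph (Fin n)) [DecidableRel G.Adj] : ℝ :=
  ∑ i, Real.exp (graphEigs G i)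

/-- `dwalk G k i` is the number of walks of length `k` starting at `i`,
computed as `(A^k 𝟙)_i`. -/
noncomputable def dwalk {n : ℕ} (G : SimpleGraph (Fin n)) [DecidableRel G.Adj]
    (k : ℕ) (i : Fin n) : ℝ :=
  ((G.adjMatrix ℝ) ^ k).mulVec (fun _ => 1) i

/-- The sequence `γ^(k) = sqrt((∑ i, d_{k+1}(i)²)/(∑ i, d_k(i)²))`. -/
noncomputable def gammaSeq {n : ℕ} (G : SimpleGraph (Fin n)) [DecidableRel G.Adj]
    (k : ℕ) : ℝ :=
  Real.sqrt ((∑ i, dwalk G (k + 1) i ^ 2) / (∑ i, dwalk G k i ^ 2))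

/-!
Since `d_{k+1} = A d_k`, it suffices that `‖A x‖ ≤ λ₁ ‖x‖` for all `x`, i.e. that every eigenvalue
`μ` of the adjacency matrix `A` satisfies `|μ| ≤ λ₁`. Expanding in an orthonormal eigenbasis gives
the Rayleigh bound `xᵀ A x ≤ λ₁ ‖x‖²`, and for a unit eigenvector `v` of `μ` the entrywise
nonnegativity of `A` gives `|μ| = |vᵀ A v| ≤ |v|ᵀ A |v| ≤ λ₁`.
-/

open Matrix WithLp
open scoped RealInnerProductSpace

namespace LinearMap.IsSymmetric

variable {ι E : Type*} [Fintype ι] [NormedAddCommGroup E] [InnerProductSpace ℝ E]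
  {T : E →ₗ[ℝ] E} (hT : T.IsSymmetric) {b : OrthonormalBasis ι ℝ E} {μ : ι → ℝ}
  (hb : ∀ i, T (b i) = μ i • b i)
include hT hb

theorem inner_eigenbasis_apply (i : ι) (x : E) : ⟪b i, T x⟫ = μ i * ⟪b i, x⟫ := by
  rw [← hT, hb, real_inner_smul_left]

theorem inner_map_self_le {c : ℝ} (hμ : ∀ i, μ i ≤ c) (x : E) : ⟪x, T x⟫ ≤ c * ⟪x, x⟫ := by
  rw [← b.sum_inner_mul_inner, ← b.sum_inner_mul_inner, Finset.mul_sum]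
  refine Finset.sum_le_sum fun i _ => ?_
  rw [hT.inner_eigenbasis_apply hb, real_inner_comm x]
  nlinarith [hμ i, sq_nonneg ⟪b i, x⟫]

theorem inner_map_map_le {r : ℝ} (hμ : ∀ i, |μ i| ≤ r) (x : E) :
    ⟪T x, T x⟫ ≤ r ^ 2 * ⟪x, x⟫ := by
  rw [← b.sum_inner_mul_inner, ← b.sum_inner_mul_inner, Finset.mul_sum]
  refine Finset.sum_le_sum fun i _ => ?_
  have hμi : μ i ^ 2 ≤ r ^ 2 := sq_le_sq' (abs_le.mp (hμ i)).1 (abs_le.mp (hμ i)).2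
  rw [real_inner_comm (b i) (T x), hT.inner_eigenbasis_apply hb, real_inner_comm x]
  nlinarith [sq_nonneg ⟪b i, x⟫]

end LinearMap.IsSymmetric

namespace Matrix

variable {ι : Type*} [Fintype ι]

theorem abs_dotProduct_le (x y : ι → ℝ) : |x ⬝ᵥ y| ≤ |x| ⬝ᵥ |y| :=
  (Finset.abs_sum_le_sum_abs _ _).trans_eq <| by simp only [abs_mul, Pi.abs_apply, dotProduct]

theorem abs_mulVec_le {A : Matrix ι ι ℝ} (hA : ∀ i j, 0 ≤ A i j) (x : ι → ℝ) :
    |A *ᵥ x| ≤ A *ᵥ |x| := fun i =>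
  (abs_dotProduct_le (A i) x).trans_eq <| by rw [abs_of_nonneg (hA i)]; rfl

variable [DecidableEq ι] {A : Matrix ι ι ℝ} (hA : A.IsHermitian)

namespace IsHermitian

theorem toEuclideanLin_eigenvectorBasis (j : ι) :
    toEuclideanLin A (hA.eigenvectorBasis j) = hA.eigenvalues j • hA.eigenvectorBasis j := by
  rw [toLpLin_apply, hA.mulVec_eigenvectorBasis, toLp_smul, toLp_ofLp]

theorem dotProduct_mulVec_le {c : ℝ} (hc : ∀ i, hA.eigenvalues i ≤ c) (x : ι → ℝ) :
    x ⬝ᵥ A *ᵥ x ≤ c * (x ⬝ᵥ x) := by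
  have := (isSymmetric_toEuclideanLin_iff.mpr hA).inner_map_self_le
    hA.toEuclideanLin_eigenvectorBasis hc (toLp 2 x)
  rwa [toLpLin_toLp, toLin'_apply, EuclideanSpace.inner_toLp_toLp,
    EuclideanSpace.inner_toLp_toLp, star_trivial, dotProduct_comm] at this

theorem mulVec_dotProduct_mulVec_le {r : ℝ} (hr : ∀ i, |hA.eigenvalues i| ≤ r) (x : ι → ℝ) :
    (A *ᵥ x) ⬝ᵥ (A *ᵥ x) ≤ r ^ 2 * (x ⬝ᵥ x) := by
  have := (isSymmetric_toEuclideanLin_iff.mpr hA).inner_map_map_le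
    hA.toEuclideanLin_eigenvectorBasis hr (toLp 2 x)
  rwa [toLpLin_toLp, toLin'_apply, EuclideanSpace.inner_toLp_toLp,
    EuclideanSpace.inner_toLp_toLp, star_trivial, star_trivial] at this

theorem abs_eigenvalues_le_of_nonneg (hA₀ : ∀ i j, 0 ≤ A i j) {c : ℝ}
    (hc : ∀ i, hA.eigenvalues i ≤ c) (j : ι) : |hA.eigenvalues j| ≤ c := by
  set v : ι → ℝ := ofLp (hA.eigenvectorBasis j)
  have hv : v ⬝ᵥ v = 1 := by
    simpa only [EuclideanSpace.inner_eq_star_dotProduct, star_trivial] using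
      hA.eigenvectorBasis.inner_eq_one j
  have hμ : hA.eigenvalues j = v ⬝ᵥ A *ᵥ v := by
    rw [hA.mulVec_eigenvectorBasis, dotProduct_smul, hv, smul_eq_mul, mul_one]
  calc |hA.eigenvalues j| = |v ⬝ᵥ A *ᵥ v| := by rw [hμ]
    _ ≤ |v| ⬝ᵥ |A *ᵥ v| := abs_dotProduct_le _ _
    _ ≤ |v| ⬝ᵥ A *ᵥ |v| :=
      dotProduct_le_dotProduct_of_nonneg_left (abs_mulVec_le hA₀ v) (abs_nonneg v)
    _ ≤ c * (|v| ⬝ᵥ |v|) := hA.dotProduct_mulVec_le hc |v|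
    _ = c := by
      rw [show |v| ⬝ᵥ |v| = v ⬝ᵥ v by simp only [dotProduct, Pi.abs_apply, abs_mul_abs_self],
        hv, mul_one]

end IsHermitian

end Matrix

theorem dwalk_succ {n : ℕ} (G : SimpleGraph (Fin n)) [DecidableRel G.Adj] (k : ℕ) :
    dwalk G (k + 1) = G.adjMatrix ℝ *ᵥ dwalk G k := by
  funext i
  simp only [dwalk, pow_succ', ← mulVec_mulVec]
  rfl

theorem sum_dwalk_sq {n : ℕ} (G : SimpleGraph (Fin n)) [DecidableRel G.Adj] (k : ℕ) :
    ∑ i, dwalk G k i ^ 2 = dwalk G k ⬝ᵥ dwalk G k := by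
  simp only [dotProduct, sq]

theorem lam_one_ge_gammaSeq_general {n : ℕ} (G : SimpleGraph (Fin n)) [DecidableRel G.Adj]
    (lam1 : ℝ) (hlam : IsGreatest (Set.range (graphEigs G)) lam1) :
    ∀ k : ℕ, lam1 ≥ gammaSeq G k := by
  intro k
  have hA := adjHerm G
  have hle : ∀ i, hA.eigenvalues i ≤ lam1 := fun i => hlam.2 (Set.mem_range_self i)
  have habs : ∀ i, |hA.eigenvalues i| ≤ lam1 :=
    hA.abs_eigenvalues_le_of_nonneg (fun i j => by by_cases h : G.Adj i j <;> simp [h]) hle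
  obtain ⟨j, -⟩ := hlam.1
  have hlam0 : 0 ≤ lam1 := (abs_nonneg _).trans (habs j)
  have hstep : (∑ i, dwalk G (k + 1) i ^ 2) ≤ lam1 ^ 2 * ∑ i, dwalk G k i ^ 2 := by
    rw [sum_dwalk_sq, sum_dwalk_sq, dwalk_succ]
    exact hA.mulVec_dotProduct_mulVec_le habs _
  calc gammaSeq G k ≤ √(lam1 ^ 2) :=
        Real.sqrt_le_sqrt (div_le_of_le_mul₀ (by positivity) (by positivity) hstep)
    _ = lam1 := Real.sqrt_sq hlam0

/-- For a connected simple graph `G`, `λ₁ ≥ γ^(k)` for every `k ≥ 0`. -/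
theorem lam_one_ge_gammaSeq {n : ℕ} (G : SimpleGraph (Fin n)) [DecidableRel G.Adj]
    (hconn : G.Connected) (lam1 : ℝ) (hlam : IsGreatest (Set.range (graphEigs G)) lam1) :
    ∀ k : ℕ, lam1 ≥ gammaSeq G k :=
  lam_one_ge_gammaSeq_general G lam1 hlam
end

section
/- Let G be a connected simple graph on n ≥ 2 vertices with largest adjacency eigenvalue λ₁, let γ^(k) = sqrt( (Σ_i d_{k+1}(i)²) / (Σ_i d_k(i)²) ), and define φ(x) = e^x + (n − 1) − x. Then the sequence {φ(γ^(k))}_{k≥0} is monotonically increasing and converges to φ(λ₁). -/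
open Matrix Finset Filter Topology

theorem tendsto_rpow_inv_natCast_nhds_one {C : ℝ} (hC : 0 < C) :
    Tendsto (fun k : ℕ => C ^ (k : ℝ)⁻¹) atTop (𝓝 1) := by
  have h := ((Real.continuousAt_const_rpow hC.ne' (b := 0)).tendsto).comp
    (tendsto_inv_atTop_zero.comp tendsto_natCast_atTop_atTop)
  rwa [Real.rpow_zero] at h

theorem le_of_forall_pow_le_mul_pow {L T C : ℝ} (hC : 0 < C) (hT : 0 ≤ T)
    (h : ∀ k : ℕ, L ^ k ≤ C * T ^ k) : L ≤ T := by
  have hlim : Tendsto (fun k : ℕ => C ^ (k : ℝ)⁻¹ * T) atTop (𝓝 T) := by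
    simpa using (tendsto_rpow_inv_natCast_nhds_one hC).mul_const T
  refine ge_of_tendsto hlim ((eventually_ne_atTop 0).mono fun k hk => ?_)
  refine le_of_pow_le_pow_left₀ hk (by positivity) ?_
  rw [mul_pow, Real.rpow_inv_natCast_pow hC.le hk]
  exact h k

section LogConvex

variable {s : ℕ → ℝ}

-- `s k = 0` forces `s (k + 1) = 0`, so this survives the convention `x / 0 = 0`.
theorem div_mul_cancel_of_sq_le_mul (h : ∀ k, s (k + 1) ^ 2 ≤ s k * s (k + 2)) (k : ℕ) :
    s (k + 1) / s k * s k = s (k + 1) := by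
  rcases eq_or_ne (s k) 0 with hk | hk
  · have := h k
    rw [hk, zero_mul] at this
    rw [hk, mul_zero, pow_eq_zero_iff two_ne_zero |>.mp (le_antisymm this (sq_nonneg _))]
  · exact div_mul_cancel₀ _ hk

theorem monotone_div_of_sq_le_mul (hs : ∀ k, 0 ≤ s k)
    (h : ∀ k, s (k + 1) ^ 2 ≤ s k * s (k + 2)) : Monotone fun k => s (k + 1) / s k := by
  refine monotone_nat_of_le_succ fun k => ?_
  rcases (hs (k + 1)).eq_or_lt with hk1 | hk1
  · simp [← hk1]
  have hk : 0 < s k := (hs k).lt_of_ne fun hk => by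
    have := div_mul_cancel_of_sq_le_mul h k
    rw [← hk, mul_zero] at this
    exact hk1.ne this
  rw [div_le_div_iff₀ hk hk1, ← sq, mul_comm]
  exact h k

theorem le_div_pow_mul_of_sq_le_mul (hs : ∀ k, 0 ≤ s k)
    (h : ∀ k, s (k + 1) ^ 2 ≤ s k * s (k + 2)) (k : ℕ) :
    s k ≤ (s (k + 1) / s k) ^ k * s 0 := by
  have hmono := monotone_div_of_sq_le_mul hs h
  suffices ∀ m ≤ k, s m ≤ (s (k + 1) / s k) ^ m * s 0 from this k le_rfl
  intro m hm
  induction m with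
  | zero => simp
  | succ m ih =>
    calc s (m + 1) = s (m + 1) / s m * s m := (div_mul_cancel_of_sq_le_mul h m).symm
      _ ≤ s (k + 1) / s k * ((s (k + 1) / s k) ^ m * s 0) :=
        mul_le_mul (hmono (by omega)) (ih (by omega)) (hs m)
          (div_nonneg (hs _) (hs _))
      _ = (s (k + 1) / s k) ^ (m + 1) * s 0 := by ring

theorem tendsto_div_of_sq_le_mul (hs : ∀ k, 0 ≤ s k)
    (h : ∀ k, s (k + 1) ^ 2 ≤ s k * s (k + 2)) {L : ℝ} (hL : 0 ≤ L)
    (hup : ∀ k, s (k + 1) ≤ L * s k) (hlow : ∀ k, L ^ k ≤ s k) :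
    Tendsto (fun k => s (k + 1) / s k) atTop (𝓝 L) := by
  set t := fun k => s (k + 1) / s k
  have ht₀ : ∀ k, 0 ≤ t k := fun k => div_nonneg (hs _) (hs _)
  have htL : ∀ k, t k ≤ L := fun k => by
    rcases (hs k).eq_or_lt with hk | hk
    · simp [t, ← hk, hL]
    · exact (div_le_iff₀ hk).mpr (hup k)
  have hbdd : BddAbove (Set.range t) := ⟨L, Set.forall_mem_range.mpr htL⟩
  have hsup := tendsto_atTop_ciSup (monotone_div_of_sq_le_mul hs h) hbdd
  suffices ⨆ k, t k = L by rwa [this] at hsup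
  refine le_antisymm (ciSup_le htL) (le_of_forall_pow_le_mul_pow
    (zero_lt_one.trans_le (by simpa using hlow 0)) ((ht₀ 0).trans (le_ciSup hbdd 0)) fun k => ?_)
  calc L ^ k ≤ t k ^ k * s 0 := (hlow k).trans (le_div_pow_mul_of_sq_le_mul hs h k)
    _ ≤ (⨆ k, t k) ^ k * s 0 :=
      mul_le_mul_of_nonneg_right (pow_le_pow_left₀ (ht₀ k) (le_ciSup hbdd k) k) (hs 0)
    _ = s 0 * (⨆ k, t k) ^ k := mul_comm _ _

end LogConvex

namespace Matrix

variable {ι : Type*} [Fintype ι]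

theorem abs_dotProduct_mulVec_le {B : Matrix ι ι ℝ} (hB : ∀ i j, 0 ≤ B i j) {x y : ι → ℝ}
    (hxy : ∀ i, |x i| ≤ y i) : |x ⬝ᵥ (B *ᵥ x)| ≤ y ⬝ᵥ (B *ᵥ y) := by
  refine (abs_sum_le_sum_abs _ _).trans (sum_le_sum fun i _ => ?_)
  rw [abs_mul]
  refine mul_le_mul (hxy i) ((abs_sum_le_sum_abs _ _).trans (sum_le_sum fun j _ => ?_))
    (abs_nonneg _) ((abs_nonneg _).trans (hxy i))
  rw [abs_mul, abs_of_nonneg (hB i j)]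
  exact mul_le_mul_of_nonneg_left (hxy j) (hB i j)

namespace IsHermitian

variable [DecidableEq ι] {A : Matrix ι ι ℝ}

theorem pow_mulVec_dotProduct_pow_mulVec (hA : A.IsHermitian) (k m : ℕ) (x : ι → ℝ) :
    (A ^ k *ᵥ x) ⬝ᵥ (A ^ m *ᵥ x) = x ⬝ᵥ (A ^ (k + m) *ᵥ x) := by
  have hT : (A ^ k)ᵀ = A ^ k := by
    simpa [IsHermitian, conjTranspose_eq_transpose_of_trivial] using hA.pow k
  rw [dotProduct_comm, dotProduct_mulVec, ← mulVec_transpose, hT, mulVec_mulVec, ← pow_add,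
    dotProduct_comm]

theorem dotProduct_pow_mulVec_eq_sum (hA : A.IsHermitian) (k : ℕ) (x : ι → ℝ) :
    x ⬝ᵥ (A ^ k *ᵥ x) =
      ∑ j, hA.eigenvalues j ^ k * (star (hA.eigenvectorUnitary : Matrix ι ι ℝ) *ᵥ x) j ^ 2 := by
  set U : Matrix ι ι ℝ := (hA.eigenvectorUnitary : Matrix ι ι ℝ)
  have hpow : A ^ k = U * diagonal (hA.eigenvalues ^ k) * Uᵀ := by
    conv_lhs => rw [hA.spectral_theorem, ← map_pow, diagonal_pow, Unitary.conjStarAlgAut_apply]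
    rfl
  rw [hpow, ← mulVec_mulVec, ← mulVec_mulVec, dotProduct_mulVec, ← mulVec_transpose,
    star_eq_conjTranspose, conjTranspose_eq_transpose_of_trivial]
  simp [dotProduct, mulVec_diagonal, sq, mul_left_comm]

theorem dotProduct_pow_mulVec_le (hA : A.IsHermitian) {k : ℕ} {c : ℝ}
    (hc : ∀ j, hA.eigenvalues j ^ k ≤ c) (x : ι → ℝ) : x ⬝ᵥ (A ^ k *ᵥ x) ≤ c * (x ⬝ᵥ x) := by
  have hx := hA.dotProduct_pow_mulVec_eq_sum 0 x
  simp only [pow_zero, one_mulVec, one_mul] at hx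
  rw [hA.dotProduct_pow_mulVec_eq_sum, hx, mul_sum]
  gcongr with j
  exact hc j

theorem eigenvectorBasis_dotProduct_pow_mulVec (hA : A.IsHermitian) (j : ι) (k : ℕ) :
    ⇑(hA.eigenvectorBasis j) ⬝ᵥ (A ^ k *ᵥ ⇑(hA.eigenvectorBasis j)) = hA.eigenvalues j ^ k := by
  rw [hA.dotProduct_pow_mulVec_eq_sum, star_eigenvectorUnitary_mulVec]
  simp [Pi.single_apply]

theorem abs_eigenvectorBasis_apply_le_one (hA : A.IsHermitian) (j i : ι) :
    |hA.eigenvectorBasis j i| ≤ 1 :=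
  (PiLp.norm_apply_le (hA.eigenvectorBasis j) i).trans_eq (hA.eigenvectorBasis.norm_eq_one j)

theorem abs_eigenvalues_le (hA : A.IsHermitian) (hA₀ : ∀ i j, 0 ≤ A i j) {lam : ℝ}
    (hlam : ∀ j, hA.eigenvalues j ≤ lam) (j : ι) : |hA.eigenvalues j| ≤ lam := by
  set v : ι → ℝ := ⇑(hA.eigenvectorBasis j)
  have hv := hA.eigenvectorBasis_dotProduct_pow_mulVec j
  calc |hA.eigenvalues j| = |v ⬝ᵥ (A ^ 1 *ᵥ v)| := by rw [hv, pow_one]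
    _ ≤ (fun i => |v i|) ⬝ᵥ (A ^ 1 *ᵥ fun i => |v i|) :=
      abs_dotProduct_mulVec_le (pow_apply_nonneg hA₀ 1) fun i => le_rfl
    _ ≤ lam * ((fun i => |v i|) ⬝ᵥ fun i => |v i|) :=
      hA.dotProduct_pow_mulVec_le (by simpa using hlam) _
    _ = lam := by
      have hv0 := hv 0
      simp only [pow_zero, one_mulVec] at hv0
      simp only [dotProduct, abs_mul_abs_self] at hv0 ⊢
      rw [hv0, mul_one]

theorem abs_eigenvalues_pow_le (hA : A.IsHermitian) (hA₀ : ∀ i j, 0 ≤ A i j) (j : ι) (k : ℕ) :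
    |hA.eigenvalues j| ^ k ≤ (fun _ => 1) ⬝ᵥ (A ^ k *ᵥ fun _ => 1) := by
  rw [← abs_pow, ← hA.eigenvectorBasis_dotProduct_pow_mulVec]
  exact abs_dotProduct_mulVec_le (pow_apply_nonneg hA₀ k) (hA.abs_eigenvectorBasis_apply_le_one j)

theorem sq_sum_sq_pow_succ_mulVec_le (hA : A.IsHermitian) (x : ι → ℝ) (k : ℕ) :
    (∑ i, (A ^ (k + 1) *ᵥ x) i ^ 2) ^ 2 ≤
      (∑ i, (A ^ k *ᵥ x) i ^ 2) * ∑ i, (A ^ (k + 2) *ᵥ x) i ^ 2 := by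
  have hmid : ∑ i, (A ^ (k + 1) *ᵥ x) i ^ 2 = ∑ i, (A ^ k *ᵥ x) i * (A ^ (k + 2) *ᵥ x) i := by
    simp only [sq]
    change (A ^ (k + 1) *ᵥ x) ⬝ᵥ (A ^ (k + 1) *ᵥ x) = (A ^ k *ᵥ x) ⬝ᵥ (A ^ (k + 2) *ᵥ x)
    rw [hA.pow_mulVec_dotProduct_pow_mulVec, hA.pow_mulVec_dotProduct_pow_mulVec,
      show k + 1 + (k + 1) = k + (k + 2) by ring]
  rw [hmid]
  exact sum_mul_sq_le_sq_mul_sq _ _ _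

theorem sum_sq_pow_succ_mulVec_le (hA : A.IsHermitian) {c : ℝ}
    (hc : ∀ j, hA.eigenvalues j ^ 2 ≤ c) (x : ι → ℝ) (k : ℕ) :
    ∑ i, (A ^ (k + 1) *ᵥ x) i ^ 2 ≤ c * ∑ i, (A ^ k *ᵥ x) i ^ 2 := by
  have h := hA.dotProduct_pow_mulVec_le hc (A ^ k *ᵥ x)
  rw [← hA.pow_mulVec_dotProduct_pow_mulVec 1 1, mulVec_mulVec, ← pow_add, add_comm] at h
  simpa only [dotProduct, sq] using h

theorem pow_le_sum_sq_pow_mulVec_one (hA : A.IsHermitian) (hA₀ : ∀ i j, 0 ≤ A i j) (j : ι)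
    (k : ℕ) : (hA.eigenvalues j ^ 2) ^ k ≤ ∑ i, (A ^ k *ᵥ fun _ => 1) i ^ 2 := by
  calc (hA.eigenvalues j ^ 2) ^ k = |hA.eigenvalues j| ^ (k + k) := by
        rw [← pow_mul, two_mul, Even.pow_abs ⟨k, rfl⟩]
    _ ≤ _ := hA.abs_eigenvalues_pow_le hA₀ j (k + k)
    _ = _ := by
      rw [← hA.pow_mulVec_dotProduct_pow_mulVec]
      simp only [dotProduct, sq]

theorem nonneg_of_isGreatest_eigenvalues (hA : A.IsHermitian) (hA₀ : ∀ i j, 0 ≤ A i j) {lam : ℝ}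
    (hlam : IsGreatest (Set.range hA.eigenvalues) lam) : 0 ≤ lam := by
  obtain ⟨⟨j, rfl⟩, hmax⟩ := hlam
  exact (abs_nonneg _).trans (hA.abs_eigenvalues_le hA₀ (fun i => hmax ⟨i, rfl⟩) j)

theorem tendsto_sum_sq_pow_mulVec_one_div (hA : A.IsHermitian) (hA₀ : ∀ i j, 0 ≤ A i j)
    {lam : ℝ} (hlam : IsGreatest (Set.range hA.eigenvalues) lam) :
    Tendsto (fun k => (∑ i, (A ^ (k + 1) *ᵥ fun _ => 1) i ^ 2) / ∑ i, (A ^ k *ᵥ fun _ => 1) i ^ 2)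
      atTop (𝓝 (lam ^ 2)) := by
  obtain ⟨⟨j, rfl⟩, hmax⟩ := hlam
  have habs := hA.abs_eigenvalues_le hA₀ fun i => hmax ⟨i, rfl⟩
  have hsq : ∀ i, hA.eigenvalues i ^ 2 ≤ hA.eigenvalues j ^ 2 := fun i =>
    sq_le_sq' (abs_le.mp (habs i)).1 (abs_le.mp (habs i)).2
  exact tendsto_div_of_sq_le_mul (s := fun k => ∑ i, (A ^ k *ᵥ fun _ => 1) i ^ 2)
    (fun _ => sum_nonneg fun _ _ => sq_nonneg _) (hA.sq_sum_sq_pow_succ_mulVec_le _) (sq_nonneg _)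
    (hA.sum_sq_pow_succ_mulVec_le hsq _) (hA.pow_le_sum_sq_pow_mulVec_one hA₀ j)

end IsHermitian

end Matrix

theorem SimpleGraph.adjMatrix_apply_nonneg {V α : Type*} [Zero α] [One α] [Preorder α]
    [ZeroLEOneClass α] (G : SimpleGraph V) [DecidableRel G.Adj] (i j : V) :
    0 ≤ G.adjMatrix α i j := by
  rw [adjMatrix_apply]
  split_ifs
  exacts [zero_le_one, le_rfl]

theorem Real.monotoneOn_exp_sub_self : MonotoneOn (fun x => exp x - x) (Set.Ici 0) := by
  intro a ha b _ hab
  have h₁ : 1 + (b - a) ≤ exp (b - a) := by linarith [add_one_le_exp (b - a)]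
  have h₂ : 1 ≤ exp a := one_le_exp ha
  have h₃ : exp b = exp a * exp (b - a) := by rw [← exp_add, add_sub_cancel]
  show exp a - a ≤ exp b - b
  nlinarith

theorem monotone_gammaSeq {n : ℕ} (G : SimpleGraph (Fin n)) [DecidableRel G.Adj] :
    Monotone (gammaSeq G) := fun _ _ hab =>
  Real.sqrt_le_sqrt <| monotone_div_of_sq_le_mul (s := fun k => ∑ i, dwalk G k i ^ 2)
    (fun _ => sum_nonneg fun _ _ => sq_nonneg _) ((adjHerm G).sq_sum_sq_pow_succ_mulVec_le _) hab

theorem tendsto_gammaSeq {n : ℕ} (G : SimpleGraph (Fin n)) [DecidableRel G.Adj] {lam1 : ℝ}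
    (hlam : IsGreatest (Set.range (graphEigs G)) lam1) :
    Tendsto (gammaSeq G) atTop (𝓝 lam1) := by
  have hA₀ := G.adjMatrix_apply_nonneg (α := ℝ)
  have h := (Real.continuous_sqrt.tendsto _).comp
    ((adjHerm G).tendsto_sum_sq_pow_mulVec_one_div hA₀ hlam)
  rwa [Real.sqrt_sq ((adjHerm G).nonneg_of_isGreatest_eigenvalues hA₀ hlam)] at h

theorem phi_gammaSeq_monotone_tendsto_general {n : ℕ}
    (G : SimpleGraph (Fin n)) [DecidableRel G.Adj]
    (lam1 : ℝ) (hlam : IsGreatest (Set.range (graphEigs G)) lam1) :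
    Monotone (fun k => Real.exp (gammaSeq G k) + ((n : ℝ) - 1) - gammaSeq G k) ∧
      Filter.Tendsto (fun k => Real.exp (gammaSeq G k) + ((n : ℝ) - 1) - gammaSeq G k)
        Filter.atTop (nhds (Real.exp lam1 + ((n : ℝ) - 1) - lam1)) := by
  refine ⟨fun a b hab => ?_, ?_⟩
  · have := Real.monotoneOn_exp_sub_self (show 0 ≤ gammaSeq G a from Real.sqrt_nonneg _)
      (show 0 ≤ gammaSeq G b from Real.sqrt_nonneg _) (monotone_gammaSeq G hab)
    dsimp only at this ⊢
    linarith
  · have hφ : Continuous fun x => Real.exp x + ((n : ℝ) - 1) - x := by fun_prop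
    exact (hφ.tendsto lam1).comp (tendsto_gammaSeq G hlam)

/-- For a connected simple graph on `n ≥ 2` vertices and
`φ(x) = e^x + (n − 1) − x`, the sequence `{φ(γ^(k))}` is monotonically increasing
and converges to `φ(λ₁)`. -/
theorem phi_gammaSeq_monotone_tendsto {n : ℕ} (hn : 2 ≤ n)
    (G : SimpleGraph (Fin n)) [DecidableRel G.Adj] (hconn : G.Connected)
    (lam1 : ℝ) (hlam : IsGreatest (Set.range (graphEigs G)) lam1) :
    Monotone (fun k => Real.exp (gammaSeq G k) + ((n : ℝ) - 1) - gammaSeq G k) ∧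
      Filter.Tendsto (fun k => Real.exp (gammaSeq G k) + ((n : ℝ) - 1) - gammaSeq G k)
        Filter.atTop (nhds (Real.exp lam1 + ((n : ℝ) - 1) - lam1)) :=
  phi_gammaSeq_monotone_tendsto_general G lam1 hlam
end
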